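/- For every p with 1/2 < p < 5/6: π₃(y) > y for all y ∈ [0, 1/2) and π₃(y) < y for all y ∈ (1/2, 1]; that is, the urn function down-crosses the diagonal at the unique fixed point 1/2. -/

import Mathlib

/-!
`π₃(y) - y` vanishes at `y = 1/2`, and the complementary factor is
`(5/6 - p)(2 + 4y(1 - y)) + (2y - 1)²/3`, which is positive on `[0, 1]` as soon as `p < 5/6`.
So `π₃(y) - y` has the sign of `1/2 - y` there.
-/

/-- The urn function of the ERW with `k = 3` extractions:
`π₃(y) = (1-p) + (2p-1)(3y² - 2y³)`. -/
noncomputable def pi3 (p y : ℝ) : ℝ :=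
  (1 - p) + (2 * p - 1) * (3 * y ^ 2 - 2 * y ^ 3)

noncomputable def pi3CrossingFactor (p y : ℝ) : ℝ :=
  (5 / 6 - p) * (2 + 4 * y * (1 - y)) + (2 * y - 1) ^ 2 / 3

theorem pi3_sub_self (p y : ℝ) : pi3 p y - y = (1 / 2 - y) * pi3CrossingFactor p y := by
  unfold pi3 pi3CrossingFactor
  ring

theorem pi3CrossingFactor_pos {p y : ℝ} (hp : p < 5 / 6) (hy0 : 0 ≤ y) (hy1 : y ≤ 1) :
    0 < pi3CrossingFactor p y := by
  have hy : 0 ≤ y * (1 - y) := mul_nonneg hy0 (sub_nonneg.2 hy1)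
  unfold pi3CrossingFactor
  positivity

theorem stmt_14_general (p : ℝ) (hp1 : p < 5 / 6) :
    (∀ y : ℝ, 0 ≤ y → y < 1 / 2 → y < pi3 p y) ∧
    (∀ y : ℝ, 1 / 2 < y → y ≤ 1 → pi3 p y < y) := by
  refine ⟨fun y hy0 hy => ?_, fun y hy hy1 => ?_⟩
  · have hpos := mul_pos (sub_pos.2 hy) (pi3CrossingFactor_pos hp1 hy0 (by linarith))
    linarith [pi3_sub_self p y]
  · have hneg := mul_neg_of_neg_of_pos (sub_neg.2 hy) (pi3CrossingFactor_pos hp1 (by linarith) hy1)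
    linarith [pi3_sub_self p y]

theorem stmt_14 (p : ℝ) (hp0 : 1 / 2 < p) (hp1 : p < 5 / 6) :
    (∀ y : ℝ, 0 ≤ y → y < 1 / 2 → y < pi3 p y) ∧
    (∀ y : ℝ, 1 / 2 < y → y ≤ 1 → pi3 p y < y) :=
  stmt_14_general p hp1
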